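/- For all a > 0, the quantity θ(a) = (a+2)^{a+2} / (2^{a+2} (a+1)^{a+1}) satisfies 0 < θ(a) < 1. -/
import Mathlib


/-- The optimized Chernoff-bound base `θ(a) = (a+2)^(a+2) / (2^(a+2) (a+1)^(a+1))`,
with real exponents. -/
noncomputable def theta (a : ℝ) : ℝ := (a + 2) ^ (a + 2) / (2 ^ (a + 2) * (a + 1) ^ (a + 1))

theorem theta_pos_lt_one (a : ℝ) (ha : 0 < a) : 0 < theta a ∧ theta a < 1 := by
  have h2 : (0:ℝ) < a + 2 := by linarith
  have h1 : (0:ℝ) < a + 1 := by linarith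
  have hpos : 0 < theta a := by
    unfold theta
    positivity
  refine ⟨hpos, ?_⟩
  -- reduce to log inequality
  have hlog : Real.log (theta a) < 0 := by
    unfold theta
    rw [Real.log_div (by positivity) (by positivity), Real.log_mul (by positivity) (by positivity),
      Real.log_rpow h2, Real.log_rpow (by norm_num), Real.log_rpow h1]
    -- want (a+2)*log(a+2) - ((a+2)*log 2 + (a+1)*log(a+1)) < 0
    have key : (a + 2) * Real.log ((a + 2) / (2 * (a + 1))) < (a + 2) * (-a / (2 * (a + 1))) := by
      have hne : (a + 2) / (2 * (a + 1)) ≠ 1 := by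
        intro h
        rw [div_eq_one_iff_eq (by positivity : (2*(a+1)) ≠ 0)] at h
        linarith
      have := Real.log_lt_sub_one_of_pos (x := (a + 2) / (2 * (a + 1))) (by positivity) hne
      have heq : (a + 2) / (2 * (a + 1)) - 1 = -a / (2 * (a + 1)) := by
        field_simp; ring
      rw [heq] at this
      exact (mul_lt_mul_iff_right₀ h2).mpr this
    have hsinh : Real.log (a + 1) < ((a + 1) - (a + 1)⁻¹) / 2 := by
      have hl : 0 < Real.log (a + 1) := Real.log_pos (by linarith)
      have := Real.self_lt_sinh_iff.mpr hl
      rwa [Real.sinh_log h1] at this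
    have hdiv : ((a + 1) - (a + 1)⁻¹) / 2 = a * (a + 2) / (2 * (a + 1)) := by
      field_simp; ring
    rw [hdiv] at hsinh
    have hsplit : Real.log ((a + 2) / (2 * (a + 1)))
        = Real.log (a + 2) - Real.log 2 - Real.log (a + 1) := by
      rw [Real.log_div (by positivity) (by positivity), Real.log_mul (by norm_num) (by positivity)]
      ring
    rw [hsplit] at key
    have hq : (a + 2) * (-a / (2 * (a + 1))) + a * (a + 2) / (2 * (a + 1)) = 0 := by
      field_simp
      ring
    nlinarith [key, hsinh]
  by_contra h
  push_neg at h
  have := Real.log_nonneg h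
  linarith
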